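/- Let ℤ[V] denote the p-typical Cartier module ⊕_{n≥0} ℤ·V^n with V the shift operator and F(a·V^0) = a·V^0, F(a·V^k) = p·a·V^{k−1} for k ≥ 1. Then for every p-typical Cartier module M there is a natural isomorphism of Cartier modules ℤ[V] ⊠ M ≅ M; that is, ℤ[V] is the unit for the tensor product ⊠. -/

import Mathlib

open scoped TensorProduct

section Box

variable {M N : Type*} [AddCommGroup M] [AddCommGroup N]

/-- The subgroup of relations defining the Cartier module tensor product `M ⊠ N`. -/
noncomputable def boxRel (FM VM : M →+ M) (FN VN : N →+ N) :
    AddSubgroup (ℕ →₀ TensorProduct ℤ M N) :=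
  AddSubgroup.closure
    ({x | ∃ (m : M) (n : N) (k : ℕ),
        x = Finsupp.single k (m ⊗ₜ[ℤ] VN n) - Finsupp.single (k + 1) (FM m ⊗ₜ[ℤ] n)} ∪
     {x | ∃ (m : M) (n : N) (k : ℕ),
        x = Finsupp.single k (VM m ⊗ₜ[ℤ] n) - Finsupp.single (k + 1) (m ⊗ₜ[ℤ] FN n)})

/-- The Verschiebung on `⊕_{k≥0} (M ⊗ N)·Vᵏ`: the shift. -/
noncomputable def boxV : (ℕ →₀ TensorProduct ℤ M N) → (ℕ →₀ TensorProduct ℤ M N) :=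
  fun f => Finsupp.mapDomain Nat.succ f

/-- The Frobenius on `⊕_{k≥0} (M ⊗ N)·Vᵏ`. -/
noncomputable def boxF (p : ℕ) (FM : M →+ M) (FN : N →+ N) :
    (ℕ →₀ TensorProduct ℤ M N) → (ℕ →₀ TensorProduct ℤ M N) :=
  fun f =>
    Finsupp.single 0 (TensorProduct.map FM.toIntLinearMap FN.toIntLinearMap (f 0)) +
      p • Finsupp.comapDomain Nat.succ f (Nat.succ_injective.injOn)

end Box

/-- The Verschiebung of the Cartier module `ℤ[V] = ⊕_{n≥0} ℤ·Vⁿ`: the shift. -/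
noncomputable def VZ : (ℕ →₀ ℤ) →+ (ℕ →₀ ℤ) :=
  Finsupp.mapDomain.addMonoidHom Nat.succ

/-- The Frobenius of the Cartier module `ℤ[V]`: `F(a·V⁰) = a·V⁰` and
`F(a·Vᵏ) = p·a·Vᵏ⁻¹` for `k ≥ 1`. -/
noncomputable def FZ (p : ℕ) : (ℕ →₀ ℤ) →+ (ℕ →₀ ℤ) :=
  (Finsupp.singleAddHom 0).comp (Finsupp.applyAddHom 0) +
    p • Finsupp.comapDomain.addMonoidHom Nat.succ_injective


section Aux

variable {M : Type*} [AddCommGroup M] (FM VM : M →+ M)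

theorem comap_single_zero {N : Type*} [AddCommGroup N] (x : N) :
    Finsupp.comapDomain Nat.succ (Finsupp.single 0 x) (Nat.succ_injective.injOn) = 0 := by
  ext n; simp [Finsupp.comapDomain_apply, Finsupp.single_apply]

theorem comap_single_succ {N : Type*} [AddCommGroup N] (n : ℕ) (x : N) :
    Finsupp.comapDomain Nat.succ (Finsupp.single (n+1) x) (Nat.succ_injective.injOn) =
      Finsupp.single n x := by
  ext j; simp [Finsupp.comapDomain_apply, Finsupp.single_apply, Nat.succ_eq_add_one]

theorem VZ_single (n : ℕ) (a : ℤ) : VZ (Finsupp.single n a) = Finsupp.single (n+1) a := by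
  simp [VZ, Finsupp.mapDomain_single]

theorem FZ_single_zero (p : ℕ) (a : ℤ) : FZ p (Finsupp.single 0 a) = Finsupp.single 0 a := by
  simp [FZ, comap_single_zero]

theorem FZ_single_succ (p n : ℕ) (a : ℤ) :
    FZ p (Finsupp.single (n+1) a) = p • Finsupp.single n a := by
  simp [FZ, comap_single_succ, Finsupp.single_apply]

noncomputable def Vl : Module.End ℤ M := VM.toIntLinearMap
noncomputable def Fl : Module.End ℤ M := FM.toIntLinearMap

noncomputable def betaBil : (ℕ →₀ ℤ) →ₗ[ℤ] M →ₗ[ℤ] M :=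
  Finsupp.lsum ℤ fun n => LinearMap.toSpanSingleton ℤ (Module.End ℤ M)
    (Vl VM ^ n * Fl FM ^ n)

noncomputable def betaT : TensorProduct ℤ (ℕ →₀ ℤ) M →ₗ[ℤ] M :=
  TensorProduct.lift (betaBil FM VM)

theorem betaT_single (n : ℕ) (a : ℤ) (m : M) :
    betaT FM VM (Finsupp.single n a ⊗ₜ[ℤ] m) = a • (Vl VM ^ n) ((Fl FM ^ n) m) := by
  unfold betaT
  erw [TensorProduct.lift.tmul]
  simp [betaBil, Module.End.mul_apply]

noncomputable def Phi : (ℕ →₀ TensorProduct ℤ (ℕ →₀ ℤ) M) →+ M :=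
  Finsupp.liftAddHom fun k =>
    ((Vl VM ^ k).toAddMonoidHom).comp (betaT FM VM).toAddMonoidHom

theorem Phi_single (k : ℕ) (x : TensorProduct ℤ (ℕ →₀ ℤ) M) :
    Phi FM VM (Finsupp.single k x) = (Vl VM ^ k) (betaT FM VM x) := by
  simp [Phi]

variable (p : ℕ) (hM : ∀ x, FM (VM x) = p • x)

include hM in
theorem rel1 (f : ℕ →₀ ℤ) (m : M) :
    betaT FM VM (f ⊗ₜ[ℤ] VM m) = Vl VM (betaT FM VM (FZ p f ⊗ₜ[ℤ] m)) := by
  induction f using Finsupp.induction_linear with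
  | zero => simp
  | add f g hf hg => simp [TensorProduct.add_tmul, map_add, hf, hg]
  | single n a =>
    rcases n with _ | n
    · rw [FZ_single_zero, betaT_single, betaT_single]
      simp [Vl]
    · rw [FZ_single_succ, betaT_single, ← TensorProduct.smul_tmul', map_nsmul, map_nsmul,
        betaT_single]
      rw [pow_succ (Fl FM), Module.End.mul_apply]
      have : Fl FM (VM m) = p • m := hM m
      rw [this, map_nsmul, map_nsmul, pow_succ' (Vl VM), Module.End.mul_apply]
      rw [smul_comm]
      simp [Vl]

theorem rel2 (f : ℕ →₀ ℤ) (m : M) :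
    betaT FM VM (VZ f ⊗ₜ[ℤ] m) = Vl VM (betaT FM VM (f ⊗ₜ[ℤ] FM m)) := by
  induction f using Finsupp.induction_linear with
  | zero => simp
  | add f g hf hg => simp [TensorProduct.add_tmul, map_add, hf, hg]
  | single n a =>
    rw [VZ_single, betaT_single, betaT_single, pow_succ (Fl FM), pow_succ' (Vl VM)]
    simp [Module.End.mul_apply, Vl, Fl]

include hM in
theorem relF (x : TensorProduct ℤ (ℕ →₀ ℤ) M) :
    betaT FM VM (TensorProduct.map (FZ p).toIntLinearMap FM.toIntLinearMap x)
      = FM (betaT FM VM x) := by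
  induction x using TensorProduct.induction_on with
  | zero => simp
  | add x y hx hy => simp [map_add, hx, hy]
  | tmul f m =>
    simp only [TensorProduct.map_tmul, AddMonoidHom.coe_toIntLinearMap]
    induction f using Finsupp.induction_linear with
    | zero => simp
    | add f g hf hg => simp [TensorProduct.add_tmul, map_add, hf, hg]
    | single n a =>
      rcases n with _ | n
      · rw [FZ_single_zero, betaT_single, betaT_single]
        simp [Fl]
      · rw [FZ_single_succ, ← TensorProduct.smul_tmul', map_nsmul, betaT_single, betaT_single,
          pow_succ' (Vl VM), Module.End.mul_apply, map_zsmul]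
        have : FM (Vl VM ((Vl VM ^ n) ((Fl FM ^ (n+1)) m))) = p • (Vl VM ^ n) ((Fl FM ^ (n+1)) m) :=
          hM _
        rw [this, pow_succ (Fl FM), Module.End.mul_apply, smul_comm]
        simp [Fl]

include hM in
theorem Phi_ker : boxRel (FZ p) VZ FM VM ≤ (Phi FM VM).ker := by
  rw [boxRel, AddSubgroup.closure_le]
  rintro x (⟨f, m, k, rfl⟩ | ⟨f, m, k, rfl⟩) <;>
    simp only [SetLike.mem_coe, AddMonoidHom.mem_ker, map_sub, Phi_single, sub_eq_zero]
  · rw [rel1 FM VM p hM, pow_succ (Vl VM), Module.End.mul_apply]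
  · rw [rel2 FM VM, pow_succ (Vl VM), Module.End.mul_apply]

theorem boxV_single (k : ℕ) (x : TensorProduct ℤ (ℕ →₀ ℤ) M) :
    boxV (Finsupp.single k x) = Finsupp.single (k+1) x := by
  simp [boxV, Finsupp.mapDomain_single]

theorem boxV_add (f g : ℕ →₀ TensorProduct ℤ (ℕ →₀ ℤ) M) :
    boxV (f + g) = boxV f + boxV g := by
  simp [boxV, Finsupp.mapDomain_add]

theorem boxF_single_zero (x : TensorProduct ℤ (ℕ →₀ ℤ) M) :
    boxF p (FZ p) FM (Finsupp.single 0 x) =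
      Finsupp.single 0 (TensorProduct.map (FZ p).toIntLinearMap FM.toIntLinearMap x) := by
  simp [boxF, comap_single_zero]

theorem boxF_single_succ (k : ℕ) (x : TensorProduct ℤ (ℕ →₀ ℤ) M) :
    boxF p (FZ p) FM (Finsupp.single (k+1) x) = p • Finsupp.single k x := by
  simp [boxF, comap_single_succ, Finsupp.single_apply]

theorem boxF_add (f g : ℕ →₀ TensorProduct ℤ (ℕ →₀ ℤ) M) :
    boxF p (FZ p) FM (f + g) = boxF p (FZ p) FM f + boxF p (FZ p) FM g := by
  ext j
  simp only [boxF, Finsupp.coe_add, Pi.add_apply, map_add, Finsupp.add_apply,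
    Finsupp.single_apply, Finsupp.smul_apply, Finsupp.comapDomain_apply, smul_add]
  split <;> abel

include hM in
theorem PhiF (t : ℕ →₀ TensorProduct ℤ (ℕ →₀ ℤ) M) :
    Phi FM VM (boxF p (FZ p) FM t) = FM (Phi FM VM t) := by
  induction t using Finsupp.induction_linear with
  | zero => simp [boxF]
  | add f g hf hg => rw [boxF_add, map_add, hf, hg, map_add, map_add]
  | single k x =>
    rcases k with _ | k
    · rw [boxF_single_zero, Phi_single, Phi_single, pow_zero, Module.End.one_apply,
        Module.End.one_apply, relF FM VM p hM]
    · rw [boxF_single_succ, map_nsmul, Phi_single, Phi_single,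
        pow_succ' (Vl VM), Module.End.mul_apply]
      have : FM (Vl VM ((Vl VM ^ k) (betaT FM VM x))) = p • (Vl VM ^ k) (betaT FM VM x) := hM _
      rw [this]

theorem PhiV (t : ℕ →₀ TensorProduct ℤ (ℕ →₀ ℤ) M) :
    Phi FM VM (boxV t) = VM (Phi FM VM t) := by
  induction t using Finsupp.induction_linear with
  | zero => simp [boxV]
  | add f g hf hg => rw [boxV_add, map_add, hf, hg, map_add, map_add]
  | single k x =>
    rw [boxV_single, Phi_single, Phi_single, pow_succ' (Vl VM), Module.End.mul_apply]
    rfl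

end Aux

section Quot

variable {M : Type*} [AddCommGroup M] (FM VM : M →+ M) (p : ℕ)
  (hM : ∀ x, FM (VM x) = p • x)

local notation "e0" => Finsupp.single (0 : ℕ) (1 : ℤ)

theorem mk_shiftV (k : ℕ) (x : M) :
    (QuotientAddGroup.mk (Finsupp.single k (e0 ⊗ₜ[ℤ] VM x)) :
        (ℕ →₀ TensorProduct ℤ (ℕ →₀ ℤ) M) ⧸ boxRel (FZ p) VZ FM VM) =
      QuotientAddGroup.mk (Finsupp.single (k+1) (e0 ⊗ₜ[ℤ] x)) := by
  rw [QuotientAddGroup.eq]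
  have : -(Finsupp.single k (e0 ⊗ₜ[ℤ] VM x)) + Finsupp.single (k+1) (e0 ⊗ₜ[ℤ] x) =
      -(Finsupp.single k (e0 ⊗ₜ[ℤ] VM x) - Finsupp.single (k+1) (FZ p e0 ⊗ₜ[ℤ] x)) := by
    rw [FZ_single_zero]; abel
  rw [this]
  exact neg_mem (AddSubgroup.subset_closure (Or.inl ⟨e0, x, k, rfl⟩))

theorem mk_shiftV_pow (n k : ℕ) (x : M) :
    (QuotientAddGroup.mk (Finsupp.single k (e0 ⊗ₜ[ℤ] (Vl VM ^ n) x)) :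
        (ℕ →₀ TensorProduct ℤ (ℕ →₀ ℤ) M) ⧸ boxRel (FZ p) VZ FM VM) =
      QuotientAddGroup.mk (Finsupp.single (k+n) (e0 ⊗ₜ[ℤ] x)) := by
  induction n generalizing k with
  | zero => simp
  | succ n ih =>
    rw [pow_succ' (Vl VM), Module.End.mul_apply]
    have h1 : Vl VM ((Vl VM ^ n) x) = VM ((Vl VM ^ n) x) := rfl
    rw [h1, mk_shiftV FM VM p, ih (k+1)]
    have hk : k + 1 + n = k + (n + 1) := by omega
    rw [hk]

theorem mk_shiftF (k : ℕ) (g : ℕ →₀ ℤ) (x : M) :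
    (QuotientAddGroup.mk (Finsupp.single k (VZ g ⊗ₜ[ℤ] x)) :
        (ℕ →₀ TensorProduct ℤ (ℕ →₀ ℤ) M) ⧸ boxRel (FZ p) VZ FM VM) =
      QuotientAddGroup.mk (Finsupp.single (k+1) (g ⊗ₜ[ℤ] FM x)) := by
  rw [QuotientAddGroup.eq]
  have : -(Finsupp.single k (VZ g ⊗ₜ[ℤ] x)) + Finsupp.single (k+1) (g ⊗ₜ[ℤ] FM x) =
      -(Finsupp.single k (VZ g ⊗ₜ[ℤ] x) - Finsupp.single (k+1) (g ⊗ₜ[ℤ] FM x)) := by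
    abel
  rw [this]
  exact neg_mem (AddSubgroup.subset_closure (Or.inr ⟨g, x, k, rfl⟩))

theorem mk_single_pow (n k : ℕ) (m : M) :
    (QuotientAddGroup.mk (Finsupp.single k ((Finsupp.single n (1:ℤ)) ⊗ₜ[ℤ] m)) :
        (ℕ →₀ TensorProduct ℤ (ℕ →₀ ℤ) M) ⧸ boxRel (FZ p) VZ FM VM) =
      QuotientAddGroup.mk (Finsupp.single (k+n) (e0 ⊗ₜ[ℤ] (Fl FM ^ n) m)) := by
  induction n generalizing k m with
  | zero => simp
  | succ n ih =>
    have h1 : (Finsupp.single (n+1) (1:ℤ)) = VZ (Finsupp.single n 1) := (VZ_single n 1).symm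
    rw [h1, mk_shiftF FM VM p, ih (k+1) (FM m)]
    have h2 : (Fl FM ^ n) (FM m) = (Fl FM ^ (n+1)) m := by
      rw [pow_succ (Fl FM), Module.End.mul_apply]; rfl
    rw [h2]
    have hk : k + 1 + n = k + (n + 1) := by omega
    rw [hk]

theorem mk_section (t : ℕ →₀ TensorProduct ℤ (ℕ →₀ ℤ) M) :
    (QuotientAddGroup.mk (Finsupp.single 0 (e0 ⊗ₜ[ℤ] Phi FM VM t)) :
        (ℕ →₀ TensorProduct ℤ (ℕ →₀ ℤ) M) ⧸ boxRel (FZ p) VZ FM VM) =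
      QuotientAddGroup.mk t := by
  induction t using Finsupp.induction_linear with
  | zero => simp
  | add f g hf hg =>
    rw [map_add, TensorProduct.tmul_add, Finsupp.single_add]
    rw [show (QuotientAddGroup.mk (Finsupp.single 0 (e0 ⊗ₜ[ℤ] Phi FM VM f)
        + Finsupp.single 0 (e0 ⊗ₜ[ℤ] Phi FM VM g)) :
        (ℕ →₀ TensorProduct ℤ (ℕ →₀ ℤ) M) ⧸ boxRel (FZ p) VZ FM VM)
      = QuotientAddGroup.mk (Finsupp.single 0 (e0 ⊗ₜ[ℤ] Phi FM VM f))
        + QuotientAddGroup.mk (Finsupp.single 0 (e0 ⊗ₜ[ℤ] Phi FM VM g)) from rfl,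
      hf, hg]
    rfl
  | single k x =>
    rw [Phi_single]
    induction x using TensorProduct.induction_on with
    | zero => simp
    | add x y hx hy =>
      rw [map_add, map_add, TensorProduct.tmul_add, Finsupp.single_add, Finsupp.single_add]
      rw [show (QuotientAddGroup.mk (Finsupp.single 0 (e0 ⊗ₜ[ℤ] (Vl VM ^ k) (betaT FM VM x))
          + Finsupp.single 0 (e0 ⊗ₜ[ℤ] (Vl VM ^ k) (betaT FM VM y))) :
          (ℕ →₀ TensorProduct ℤ (ℕ →₀ ℤ) M) ⧸ boxRel (FZ p) VZ FM VM)
        = QuotientAddGroup.mk (Finsupp.single 0 (e0 ⊗ₜ[ℤ] (Vl VM ^ k) (betaT FM VM x)))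
          + QuotientAddGroup.mk (Finsupp.single 0 (e0 ⊗ₜ[ℤ] (Vl VM ^ k) (betaT FM VM y)))
        from rfl, hx, hy]
      rfl
    | tmul f m =>
      rw [mk_shiftV_pow FM VM p, zero_add]
      induction f using Finsupp.induction_linear with
      | zero => simp
      | add f g hf hg =>
        rw [TensorProduct.add_tmul, map_add, TensorProduct.tmul_add,
          Finsupp.single_add, Finsupp.single_add]
        rw [show (QuotientAddGroup.mk (Finsupp.single k (e0 ⊗ₜ[ℤ] betaT FM VM (f ⊗ₜ[ℤ] m))
            + Finsupp.single k (e0 ⊗ₜ[ℤ] betaT FM VM (g ⊗ₜ[ℤ] m))) :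
            (ℕ →₀ TensorProduct ℤ (ℕ →₀ ℤ) M) ⧸ boxRel (FZ p) VZ FM VM)
          = QuotientAddGroup.mk (Finsupp.single k (e0 ⊗ₜ[ℤ] betaT FM VM (f ⊗ₜ[ℤ] m)))
            + QuotientAddGroup.mk (Finsupp.single k (e0 ⊗ₜ[ℤ] betaT FM VM (g ⊗ₜ[ℤ] m)))
          from rfl, hf, hg]
        rfl
      | single n a =>
        rw [betaT_single]
        have hL : Finsupp.single k (e0 ⊗ₜ[ℤ] (a • (Vl VM ^ n) ((Fl FM ^ n) m)))
            = a • Finsupp.single k (e0 ⊗ₜ[ℤ] (Vl VM ^ n) ((Fl FM ^ n) m)) := by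
          rw [TensorProduct.tmul_smul, Finsupp.smul_single]
        have hR : Finsupp.single k ((Finsupp.single n a) ⊗ₜ[ℤ] m)
            = a • Finsupp.single k ((Finsupp.single n (1:ℤ)) ⊗ₜ[ℤ] m) := by
          rw [show (Finsupp.single n a) = a • Finsupp.single n (1:ℤ) by simp,
            ← TensorProduct.smul_tmul', Finsupp.smul_single]
        rw [hL, hR, QuotientAddGroup.mk_zsmul, QuotientAddGroup.mk_zsmul]
        conv_rhs => rw [mk_single_pow FM VM p]
        conv_lhs => rw [mk_shiftV_pow FM VM p]

end Quot

/-- `ℤ[V]` is the unit for the tensor product `⊠` of `p`-typical Cartier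
modules: for every `p`-typical Cartier module `M` there is an isomorphism of Cartier
modules `ℤ[V] ⊠ M ≅ M` sending `(1·V⁰ ⊗ m)V⁰` to `m`.  Here `F'` and `V'` denote the
descended Cartier operators on `ℤ[V] ⊠ M`. -/
theorem stmt_7 (p : ℕ) (hp : p.Prime)
    {M : Type*} [AddCommGroup M] (FM VM : M →+ M) (hM : ∀ x, FM (VM x) = p • x)
    (F' V' : (ℕ →₀ TensorProduct ℤ (ℕ →₀ ℤ) M) ⧸ boxRel (FZ p) VZ FM VM →+
      (ℕ →₀ TensorProduct ℤ (ℕ →₀ ℤ) M) ⧸ boxRel (FZ p) VZ FM VM)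
    (hF' : ∀ t, F' (QuotientAddGroup.mk t) = QuotientAddGroup.mk (boxF p (FZ p) FM t))
    (hV' : ∀ t, V' (QuotientAddGroup.mk t) = QuotientAddGroup.mk (boxV t)) :
    ∃ e : ((ℕ →₀ TensorProduct ℤ (ℕ →₀ ℤ) M) ⧸ boxRel (FZ p) VZ FM VM) ≃+ M,
      (∀ q, e (F' q) = FM (e q)) ∧
      (∀ q, e (V' q) = VM (e q)) ∧
      (∀ m : M,
        e (QuotientAddGroup.mk
            (Finsupp.single 0 ((Finsupp.single 0 (1 : ℤ)) ⊗ₜ[ℤ] m))) = m) := by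
  classical
  let e : ((ℕ →₀ TensorProduct ℤ (ℕ →₀ ℤ) M) ⧸ boxRel (FZ p) VZ FM VM) →+ M :=
    QuotientAddGroup.lift _ (Phi FM VM) (Phi_ker FM VM p hM)
  have he : ∀ t, e (QuotientAddGroup.mk t) = Phi FM VM t := fun t => rfl
  have hsec : ∀ m : M,
      e (QuotientAddGroup.mk
        (Finsupp.single 0 ((Finsupp.single 0 (1:ℤ)) ⊗ₜ[ℤ] m))) = m := by
    intro m
    rw [he, Phi_single, betaT_single]
    simp
  refine ⟨{ toFun := e,
            invFun := fun m => QuotientAddGroup.mk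
              (Finsupp.single 0 ((Finsupp.single 0 (1:ℤ)) ⊗ₜ[ℤ] m)),
            left_inv := ?_, right_inv := hsec, map_add' := e.map_add }, ?_, ?_, ?_⟩
  · intro q
    refine QuotientAddGroup.induction_on q fun t => ?_
    rw [he]
    exact mk_section FM VM p t
  · intro q
    refine QuotientAddGroup.induction_on q fun t => ?_
    show e (F' (QuotientAddGroup.mk t)) = FM (e (QuotientAddGroup.mk t))
    rw [hF' t, he, he, PhiF FM VM p hM]
  · intro q
    refine QuotientAddGroup.induction_on q fun t => ?_
    show e (V' (QuotientAddGroup.mk t)) = VM (e (QuotientAddGroup.mk t))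
    rw [hV' t, he, he, PhiV FM VM]
  · exact hsec
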